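/- Let d ≥ 1. There exists a constant C = C(d) > 0 such that for every nonzero x ∈ ℝ^d and every t > 0, ∫_{ℝ^d} p_t(y) log⁺(1/|y - x|) dy ≤ C (1 + log⁺(1/|x|)). -/

import Mathlib

/-!
Split the integral at the ball `B(x, r)`, `r = ‖x‖ / 2`. Off the ball `log⁺ ‖y - x‖⁻¹ ≤ log⁺ r⁻¹`,
and `p_t` has total mass one. On the ball `‖y‖ ≥ r`, and `p_t(y) ≤ (1 + d!) ‖y‖⁻ᵈ` uniformly in `t`
because `s ^ (d/2) e⁻ˢ` is bounded. Scaling by `r` gives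
`∫_{B(0,r)} log⁺ ‖z‖⁻¹ ≤ rᵈ (|B₁| log⁺ r⁻¹ + ∫_{B₁} log⁺ ‖w‖⁻¹)`, the last integral being finite
since `log⁺ ‖w‖⁻¹ ≤ 2 ‖w‖^(-1/2)`; the factor `rᵈ` cancels the `r⁻ᵈ` from the kernel bound.
-/

open MeasureTheory Real Filter Topology

noncomputable def heatKernel (d : ℕ) (t : ℝ) (y : EuclideanSpace ℝ (Fin d)) : ℝ :=
  (2 * Real.pi * t) ^ (-(d : ℝ) / 2) * Real.exp (-‖y‖ ^ 2 / (2 * t))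

open Metric Module
open scoped Nat

theorem posLog_le_two_mul_rpow_half {u : ℝ} (hu : 0 ≤ u) : log⁺ u ≤ 2 * u ^ (1 / 2 : ℝ) :=
  max_le (by positivity)
    ((log_le_rpow_div hu (by norm_num : (0 : ℝ) < 1 / 2)).trans_eq (by rw [div_eq_mul_inv]; ring))

section PosLogInvNorm

variable {E : Type*} [NormedAddCommGroup E] [NormedSpace ℝ E] [FiniteDimensional ℝ E]
  [MeasurableSpace E] [BorelSpace E] (μ : Measure E) [μ.IsAddHaarMeasure]

theorem integrableOn_ball_posLog_inv_norm (hE : 1 ≤ finrank ℝ E) (r : ℝ) :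
    IntegrableOn (fun z : E => log⁺ ‖z‖⁻¹) (ball 0 r) μ := by
  refine integrableOn_ball_of_norm_le_rpow hE (C := 2) (α := 1 / 2) ?_
    (ae_of_all _ fun z => ?_) (by fun_prop)
  · have : (1 : ℝ) ≤ finrank ℝ E := by exact_mod_cast hE
    linarith
  · rw [norm_of_nonneg posLog_nonneg, rpow_neg (norm_nonneg z), ← inv_rpow (norm_nonneg z)]
    exact posLog_le_two_mul_rpow_half (inv_nonneg.2 (norm_nonneg z))

theorem setIntegral_ball_posLog_inv_norm_le (hE : 1 ≤ finrank ℝ E) {r : ℝ} (hr : 0 < r) :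
    ∫ z in ball (0 : E) r, log⁺ ‖z‖⁻¹ ∂μ ≤
      r ^ finrank ℝ E * (μ.real (ball 0 1) * log⁺ r⁻¹ + ∫ w in ball (0 : E) 1, log⁺ ‖w‖⁻¹ ∂μ) := by
  have hscale : ∫ z in ball (0 : E) r, log⁺ ‖z‖⁻¹ ∂μ =
      r ^ finrank ℝ E * ∫ w in ball (0 : E) 1, log⁺ ‖r • w‖⁻¹ ∂μ := by
    have h := Measure.setIntegral_comp_smul_of_pos μ (fun z : E => log⁺ ‖z‖⁻¹) (ball 0 1) hr
    rw [h, smul_unitBall_of_pos hr, smul_eq_mul, mul_inv_cancel_left₀ (by positivity)]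
  have hsplit : ∀ w : E, log⁺ ‖r • w‖⁻¹ ≤ log⁺ r⁻¹ + log⁺ ‖w‖⁻¹ := fun w => by
    rw [norm_smul, norm_of_nonneg hr.le, mul_inv]
    exact posLog_mul
  have hconst : IntegrableOn (fun _ : E => log⁺ r⁻¹) (ball 0 1) μ :=
    integrableOn_const measure_ball_lt_top.ne
  have hlog := integrableOn_ball_posLog_inv_norm μ hE 1
  rw [hscale, ← smul_eq_mul (a := μ.real _), ← setIntegral_const, ← integral_add hconst hlog]
  refine mul_le_mul_of_nonneg_left ?_ (by positivity)
  exact integral_mono_of_nonneg (ae_of_all _ fun _ => posLog_nonneg) (hconst.add hlog)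
    (ae_of_all _ hsplit)

theorem integral_mul_posLog_inv_norm_sub_le (hE : 1 ≤ finrank ℝ E) {p : E → ℝ}
    (hp0 : ∀ y, 0 ≤ p y) (hp : Integrable p μ) (x : E) {r M : ℝ} (hr : 0 < r)
    (hpM : ∀ y ∈ ball x r, p y ≤ M) :
    ∫ y, p y * log⁺ ‖y - x‖⁻¹ ∂μ ≤
      log⁺ r⁻¹ * ∫ y, p y ∂μ + M * ∫ z in ball (0 : E) r, log⁺ ‖z‖⁻¹ ∂μ := by
  set h : E → ℝ := (ball (0 : E) r).indicator fun z => log⁺ ‖z‖⁻¹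
  have hh : Integrable h μ :=
    (integrable_indicator_iff measurableSet_ball).2 (integrableOn_ball_posLog_inv_norm μ hE r)
  have hbound : ∀ y, p y * log⁺ ‖y - x‖⁻¹ ≤ log⁺ r⁻¹ * p y + M * h (y - x) := by
    intro y
    by_cases hy : y ∈ ball x r
    · have hz : y - x ∈ ball (0 : E) r := by rwa [mem_ball_zero_iff, ← dist_eq_norm]
      rw [show h (y - x) = log⁺ ‖y - x‖⁻¹ from Set.indicator_of_mem hz _]
      have := mul_le_mul_of_nonneg_right (hpM y hy) (posLog_nonneg (x := ‖y - x‖⁻¹))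
      nlinarith [mul_nonneg (posLog_nonneg (x := r⁻¹)) (hp0 y)]
    · have hz : y - x ∉ ball (0 : E) r := by rwa [mem_ball_zero_iff, ← dist_eq_norm]
      have hry : r ≤ ‖y - x‖ := by rwa [mem_ball_iff_norm, not_lt] at hy
      rw [show h (y - x) = 0 from Set.indicator_of_notMem hz _, mul_zero, add_zero,
        mul_comm (log⁺ r⁻¹)]
      exact mul_le_mul_of_nonneg_left
        (posLog_le_posLog (inv_nonneg.2 (norm_nonneg _)) (inv_anti₀ hr hry)) (hp0 y)
  calc ∫ y, p y * log⁺ ‖y - x‖⁻¹ ∂μ ≤ ∫ y, (log⁺ r⁻¹ * p y + M * h (y - x)) ∂μ :=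
        integral_mono_of_nonneg (ae_of_all _ fun y => mul_nonneg (hp0 y) posLog_nonneg)
          ((hp.const_mul _).add ((hh.comp_sub_right x).const_mul M)) (ae_of_all _ hbound)
    _ = log⁺ r⁻¹ * ∫ y, p y ∂μ + M * ∫ z in ball (0 : E) r, log⁺ ‖z‖⁻¹ ∂μ := by
        rw [integral_add (hp.const_mul _) ((hh.comp_sub_right x).const_mul M), integral_const_mul,
          integral_const_mul, integral_sub_right_eq_self h x, integral_indicator measurableSet_ball]

end PosLogInvNorm

theorem posLog_inv_div_two_le (u : ℝ) : log⁺ (u / 2)⁻¹ ≤ 1 + log⁺ u⁻¹ :=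
  calc log⁺ (u / 2)⁻¹ = log⁺ (2 * u⁻¹) := by rw [inv_div, div_eq_mul_inv]
    _ ≤ log⁺ 2 + log⁺ u⁻¹ := posLog_mul
    _ ≤ 1 + log⁺ u⁻¹ := by
      rw [posLog_eq_log (by norm_num)]
      linarith [log_two_lt_d9]

theorem rpow_mul_exp_neg_le_one_add_factorial {a s : ℝ} {n : ℕ} (ha : 0 ≤ a) (han : a ≤ n)
    (hs : 0 ≤ s) : s ^ a * exp (-s) ≤ 1 + n ! := by
  have hpow : s ^ a ≤ 1 + s ^ n := by
    rcases le_or_gt s 1 with h | h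
    · linarith [rpow_le_one hs h ha, pow_nonneg hs n]
    · linarith [rpow_natCast s n ▸ rpow_le_rpow_of_exponent_le h.le han]
  have hfact : s ^ n * exp (-s) ≤ n ! := by
    rw [exp_neg, ← div_eq_mul_inv, div_le_iff₀ (exp_pos s), mul_comm, ← div_le_iff₀ (by positivity)]
    exact pow_div_factorial_le_exp s hs n
  calc s ^ a * exp (-s) ≤ (1 + s ^ n) * exp (-s) := by gcongr
    _ = exp (-s) + s ^ n * exp (-s) := by ring
    _ ≤ 1 + n ! := add_le_add (exp_le_one_iff.2 (by linarith)) hfact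

section HeatKernel

variable {d : ℕ} {t : ℝ}

theorem heatKernel_nonneg (ht : 0 < t) (y : EuclideanSpace ℝ (Fin d)) : 0 ≤ heatKernel d t y := by
  unfold heatKernel; positivity

theorem heatKernel_eq_mul_exp_neg_mul_sq_norm (y : EuclideanSpace ℝ (Fin d)) :
    heatKernel d t y = (2 * π * t) ^ (-(d : ℝ) / 2) * exp (-(2 * t)⁻¹ * ‖y‖ ^ 2) := by
  unfold heatKernel; congr 2; ring

theorem integral_heatKernel (ht : 0 < t) : ∫ y, heatKernel d t y = 1 := by
  simp_rw [heatKernel_eq_mul_exp_neg_mul_sq_norm]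
  rw [integral_const_mul, GaussianFourier.integral_rexp_neg_mul_sq_norm (by positivity),
    finrank_euclideanSpace_fin, div_inv_eq_mul, neg_div, rpow_neg (by positivity),
    show π * (2 * t) = 2 * π * t by ring, inv_mul_cancel₀ (by positivity)]

theorem integrable_heatKernel (ht : 0 < t) : Integrable (heatKernel d t) :=
  Integrable.of_integral_ne_zero (by rw [integral_heatKernel ht]; exact one_ne_zero)

theorem heatKernel_le_div_norm_pow (ht : 0 < t) {y : EuclideanSpace ℝ (Fin d)} (hy : y ≠ 0) :
    heatKernel d t y ≤ (1 + d !) / ‖y‖ ^ d := by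
  set s := ‖y‖ ^ 2 / (2 * t) with hs
  have hy0 : 0 < ‖y‖ := norm_pos_iff.2 hy
  have hnorm : ‖y‖ ^ d = (‖y‖ ^ 2) ^ ((d : ℝ) / 2) := by
    rw [← rpow_natCast, ← rpow_natCast _ 2, ← rpow_mul hy0.le]
    ring_nf
  have hscale : (2 * π * t) ^ (-(d : ℝ) / 2) * ‖y‖ ^ d = (s / π) ^ ((d : ℝ) / 2) := by
    rw [hnorm, neg_div, rpow_neg (by positivity), ← div_eq_inv_mul, ← div_rpow (by positivity)
      (by positivity)]
    congr 1
    rw [hs]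
    field_simp
  rw [le_div_iff₀ (by positivity)]
  calc heatKernel d t y * ‖y‖ ^ d = (s / π) ^ ((d : ℝ) / 2) * exp (-s) := by
        rw [← hscale, heatKernel, hs]; ring_nf
    _ ≤ s ^ ((d : ℝ) / 2) * exp (-s) := by
        gcongr
        exact div_le_self (by positivity) (by linarith [pi_gt_three])
    _ ≤ 1 + d ! := rpow_mul_exp_neg_le_one_add_factorial (by positivity) (by linarith)
        (by positivity)

theorem heatKernel_le_of_mem_ball (ht : 0 < t) {x y : EuclideanSpace ℝ (Fin d)} (hx : x ≠ 0)
    (hy : y ∈ ball x (‖x‖ / 2)) : heatKernel d t y ≤ (1 + d !) / (‖x‖ / 2) ^ d := by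
  have hr : 0 < ‖x‖ / 2 := by have := norm_pos_iff.2 hx; positivity
  have hry : ‖x‖ / 2 ≤ ‖y‖ := by
    rw [mem_ball_iff_norm'] at hy
    linarith [norm_sub_norm_le x y]
  exact (heatKernel_le_div_norm_pow ht (norm_pos_iff.1 (hr.trans_le hry))).trans
    (div_le_div_of_nonneg_left (by positivity) (by positivity) (pow_le_pow_left₀ hr.le hry d))

end HeatKernel

theorem heat_kernel_logplus_bound (d : ℕ) (hd : 1 ≤ d) :
    ∃ C > 0, ∀ x : EuclideanSpace ℝ (Fin d), x ≠ 0 → ∀ t : ℝ, 0 < t →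
      (∫ y, heatKernel d t y * max (Real.log (1 / ‖y - x‖)) 0) ≤
        C * (1 + max (Real.log (1 / ‖x‖)) 0) := by
  have hE : 1 ≤ finrank ℝ (EuclideanSpace ℝ (Fin d)) := by rwa [finrank_euclideanSpace_fin]
  set V := volume.real (ball (0 : EuclideanSpace ℝ (Fin d)) 1)
  set A := ∫ w in ball (0 : EuclideanSpace ℝ (Fin d)) 1, log⁺ ‖w‖⁻¹
  set K : ℝ := 1 + (d ! : ℝ)
  have hA : 0 ≤ A := setIntegral_nonneg measurableSet_ball fun _ _ => posLog_nonneg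
  refine ⟨1 + K * V + K * A, add_pos_of_pos_of_nonneg (by positivity) (by positivity),
    fun x hx t ht => ?_⟩
  simp only [one_div, max_comm _ (0 : ℝ), ← posLog_apply]
  set r := ‖x‖ / 2
  have hr : 0 < r := by have := norm_pos_iff.2 hx; positivity
  calc ∫ y, heatKernel d t y * log⁺ ‖y - x‖⁻¹
      ≤ log⁺ r⁻¹ * 1 + K / r ^ d * ∫ z in ball (0 : EuclideanSpace ℝ (Fin d)) r, log⁺ ‖z‖⁻¹ := by
        simpa only [integral_heatKernel ht] using integral_mul_posLog_inv_norm_sub_le volume hE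
          (heatKernel_nonneg ht) (integrable_heatKernel ht) x hr
          fun y => heatKernel_le_of_mem_ball ht hx
    _ ≤ log⁺ r⁻¹ * 1 + K / r ^ d * (r ^ d * (V * log⁺ r⁻¹ + A)) := by
        gcongr
        simpa only [finrank_euclideanSpace_fin] using
          setIntegral_ball_posLog_inv_norm_le volume hE hr
    _ = (1 + K * V) * log⁺ r⁻¹ + K * A := by field_simp; ring
    _ ≤ (1 + K * V + K * A) * (1 + log⁺ ‖x‖⁻¹) := by
        have hKA : 0 ≤ K * A := by positivity
        nlinarith [mul_le_mul_of_nonneg_left (posLog_inv_div_two_le ‖x‖)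
          (by positivity : 0 ≤ 1 + K * V), mul_nonneg hKA (posLog_nonneg (x := ‖x‖⁻¹))]
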